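/- arXiv:2506.16797 — 3 statements merged into one kernel-verified Lean document; each statement's English description precedes it below -/
import Mathlib

section
/- Let Q be a symmetric positive definite d×d matrix satisfying QAᵀ + AQ − QCᵀCQ + I = 0. Then with F = −QCᵀ and S = CᵀC + Q⁻¹Q⁻¹, one has Q⁻¹(A + FC) + (A + FC)ᵀQ⁻¹ = −S, and S is positive definite; hence A + FC is Hurwitz. -/
open Matrix ComplexOrder

section Helpers
variable {n : Type*} [Fintype n] [DecidableEq n]
open scoped MatrixOrder

private lemma mapCT' (M : Matrix n n ℝ) : (M.map (Complex.ofReal))ᴴ = Mᵀ.map Complex.ofReal := by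
  ext i j; simp [conjTranspose_apply, Complex.conj_ofReal]

private lemma mapHerm' {M : Matrix n n ℝ} (hM : M.IsHermitian) :
    (M.map (Complex.ofReal)).IsHermitian := by
  unfold IsHermitian
  rw [mapCT', show Mᵀ = M from hM]

private lemma mapPosDef' {M : Matrix n n ℝ} (hM : M.PosDef) :
    (M.map (Complex.ofReal)).PosDef := by
  set N := CFC.sqrt M with hNdef
  have hNN : N * N = M := CFC.sqrt_mul_sqrt_self M hM.posSemidef.nonneg
  have hNH : Nᴴ = N := (CFC.sqrt_nonneg M).posSemidef.1
  have hdet : N.det ≠ 0 := by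
    intro h
    have : M.det = 0 := by rw [← hNN, det_mul, h, mul_zero]
    exact hM.det_pos.ne' this
  have hdetc : (N.map (Complex.ofReal)).det ≠ 0 := by
    have : (N.map (Complex.ofReal)).det = Complex.ofReal N.det := by
      rw [show (N.map (Complex.ofReal)) = Complex.ofRealHom.mapMatrix N from rfl,
        ← RingHom.map_det]; rfl
    rw [this]; simpa using hdet
  refine PosDef.of_dotProduct_mulVec_pos (mapHerm' hM.1) fun x hx => ?_
  have hMc : M.map Complex.ofReal = (N.map Complex.ofReal)ᴴ * (N.map Complex.ofReal) := by
    rw [mapCT', show Nᵀ = N from hNH, ← hNN]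
    ext i j
    simp [mul_apply]
  rw [hMc, ← mulVec_mulVec, dotProduct_mulVec, ← star_mulVec]
  have hU : IsUnit (N.map Complex.ofReal) := (isUnit_iff_isUnit_det _).2 (isUnit_iff_ne_zero.2 hdetc)
  have hinj := mulVec_injective_iff_isUnit.mpr hU
  exact dotProduct_star_self_pos_iff.mpr
    (fun h => hx (hinj (show _ = N.map Complex.ofReal *ᵥ 0 by simp [h])))

private lemma mulSelfPosDef' {M : Matrix n n ℝ} (hM : M.PosDef) : (M * M).PosDef := by
  have hH : Mᴴ = M := hM.1
  have h : M * M = Mᴴ * M := by rw [hH]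
  rw [h]
  refine PosDef.of_dotProduct_mulVec_pos (posSemidef_conjTranspose_mul_self M).1 fun x hx => ?_
  rw [← mulVec_mulVec, dotProduct_mulVec, ← star_mulVec]
  have hinj := mulVec_injective_iff_isUnit.mpr hM.isUnit
  exact dotProduct_star_self_pos_iff.mpr
    (fun h0 => hx (hinj (show _ = M *ᵥ 0 by simp [h0])))

end Helpers

/-- If `Q ≻ 0` solves `QAᵀ + AQ − QCᵀCQ + I = 0`, then with `F = −QCᵀ` and
`S = CᵀC + Q⁻¹Q⁻¹` one has `Q⁻¹(A+FC) + (A+FC)ᵀQ⁻¹ = −S`, `S ≻ 0`, and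
`A + FC` is Hurwitz. -/
theorem stmt_5 (d r : ℕ)
    (A : Matrix (Fin d) (Fin d) ℝ) (C : Matrix (Fin r) (Fin d) ℝ)
    (Q : Matrix (Fin d) (Fin d) ℝ) (hQ : Q.PosDef)
    (hRic : Q * Aᵀ + A * Q - Q * Cᵀ * C * Q + 1 = 0)
    (F : Matrix (Fin d) (Fin r) ℝ) (hF : F = -(Q * Cᵀ))
    (S : Matrix (Fin d) (Fin d) ℝ) (hS : S = Cᵀ * C + Q⁻¹ * Q⁻¹) :
    Q⁻¹ * (A + F * C) + (A + F * C)ᵀ * Q⁻¹ = -S ∧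
    S.PosDef ∧
    (∀ μ : ℂ, μ ∈ spectrum ℂ ((A + F * C).map (Complex.ofReal)) → μ.re < 0) := by
  have hdet : IsUnit Q.det := hQ.det_pos.ne'.isUnit
  have hPQ : Q⁻¹ * Q = 1 := nonsing_inv_mul Q hdet
  have hQP : Q * Q⁻¹ = 1 := mul_nonsing_inv Q hdet
  have cancel1 : ∀ X : Matrix (Fin d) (Fin d) ℝ, Q⁻¹ * (Q * X) = X := fun X => by
    rw [← Matrix.mul_assoc, hPQ, one_mul]
  have cancel2 : ∀ X : Matrix (Fin d) (Fin d) ℝ, Q * (Q⁻¹ * X) = X := fun X => by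
    rw [← Matrix.mul_assoc, hQP, one_mul]
  have hQs : Qᵀ = Q := by simpa using hQ.isHermitian.eq
  -- Part 1
  have part1 : Q⁻¹ * (A + F * C) + (A + F * C)ᵀ * Q⁻¹ = -S := by
    subst hF hS
    have key := congrArg (fun X => Q⁻¹ * X * Q⁻¹) hRic
    simp only [Matrix.mul_add, Matrix.add_mul, Matrix.mul_sub, Matrix.sub_mul,
      Matrix.mul_assoc, cancel1, cancel2, hPQ, hQP, Matrix.mul_one, Matrix.one_mul,
      Matrix.mul_zero, Matrix.zero_mul] at key
    simp only [Matrix.transpose_add, Matrix.transpose_neg, Matrix.transpose_mul,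
      Matrix.transpose_transpose, hQs, Matrix.mul_add, Matrix.add_mul, Matrix.neg_mul,
      Matrix.mul_neg, Matrix.mul_assoc, cancel1, cancel2, hPQ, hQP, Matrix.mul_one]
    linear_combination (norm := abel) key
  -- Part 2
  have hCC : (Cᵀ * C).PosSemidef := by
    have := posSemidef_conjTranspose_mul_self C
    simpa using this
  have part2 : S.PosDef := by
    rw [hS]
    exact Matrix.PosDef.posSemidef_add hCC (mulSelfPosDef' hQ.inv)
  refine ⟨part1, part2, fun μ hμ => ?_⟩
  -- Part 3
  set M : Matrix (Fin d) (Fin d) ℝ := A + F * C with hM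
  set Mc := M.map Complex.ofReal with hMc
  set Qi := (Q⁻¹).map Complex.ofReal with hQi
  set Sc := S.map Complex.ofReal with hSc
  -- eigenvector
  have hsing : ¬ IsUnit (μ • (1 : Matrix (Fin d) (Fin d) ℂ) - Mc) := by
    rw [spectrum.mem_iff] at hμ
    simpa [Algebra.algebraMap_eq_smul_one] using hμ
  have hdet0 : (μ • (1 : Matrix (Fin d) (Fin d) ℂ) - Mc).det = 0 := by
    by_contra h
    exact hsing ((isUnit_iff_isUnit_det _).2 (isUnit_iff_ne_zero.2 h))
  obtain ⟨v, hv0, hv⟩ := (Matrix.exists_mulVec_eq_zero_iff).2 hdet0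
  have heig : Mc *ᵥ v = μ • v := by
    have := hv
    rw [sub_mulVec, smul_mulVec, one_mulVec, sub_eq_zero] at this
    exact this.symm
  -- complexified Lyapunov equation
  have mapmul : ∀ (X Y : Matrix (Fin d) (Fin d) ℝ),
      (X * Y).map Complex.ofReal = X.map Complex.ofReal * Y.map Complex.ofReal := fun X Y => by
    ext i j; simp [mul_apply]
  have mapadd : ∀ (X Y : Matrix (Fin d) (Fin d) ℝ),
      (X + Y).map Complex.ofReal = X.map Complex.ofReal + Y.map Complex.ofReal := fun X Y => by
    ext i j; simp
  have mapneg : ∀ (X : Matrix (Fin d) (Fin d) ℝ),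
      (-X).map Complex.ofReal = -(X.map Complex.ofReal) := fun X => by
    ext i j; simp
  have hLyap : Qi * Mc + Mcᴴ * Qi = -Sc := by
    rw [hMc, hQi, hSc, mapCT', ← mapmul, ← mapmul, ← mapadd, part1, mapneg]
  -- quadratic forms
  have hq := (mapPosDef' hQ.inv).dotProduct_mulVec_pos hv0
  have hs := (mapPosDef' part2).dotProduct_mulVec_pos hv0
  set q : ℂ := star v ⬝ᵥ Qi *ᵥ v with hqdef
  set s : ℂ := star v ⬝ᵥ Sc *ᵥ v with hsdef
  have hkey : (μ + star μ) * q = -s := by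
    have h1 : star v ⬝ᵥ (Qi * Mc) *ᵥ v = μ * q := by
      rw [← mulVec_mulVec, heig, mulVec_smul, dotProduct_smul, smul_eq_mul]
    have h2 : star v ⬝ᵥ (Mcᴴ * Qi) *ᵥ v = star μ * q := by
      rw [← mulVec_mulVec, dotProduct_mulVec, ← star_mulVec, heig, star_smul,
        smul_dotProduct, smul_eq_mul]
    have h3 : star v ⬝ᵥ (Qi * Mc + Mcᴴ * Qi) *ᵥ v = -s := by
      rw [hLyap, neg_mulVec, dotProduct_neg]
    rw [add_mulVec, dotProduct_add, h1, h2] at h3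
    rw [add_mul]
    exact h3
  -- take real parts
  rw [Complex.lt_def] at hq hs
  simp only [Complex.zero_re, Complex.zero_im] at hq hs
  have hre := congrArg Complex.re hkey
  rw [show μ + star μ = ((2 * μ.re : ℝ) : ℂ) from Complex.add_conj μ] at hre
  simp only [Complex.neg_re, Complex.re_ofReal_mul] at hre
  nlinarith [hq.1, hs.1, hre, mul_pos hq.1 hs.1]
end

section
/- Suppose h : [t_k, t_{k+1}] → ℝ is nonnegative, h(t_k) = 0, h'(t) ≤ Ā h(t) + Δ with Ā, Δ > 0, and at time t_{k+1} the triggering condition forces h(t_{k+1}) ≥ μ e^{−ϖ t_{k+1}} for some μ, ϖ > 0. Then t_{k+1} − t_k ≥ (1/Ā) ln(1 + (μ Ā / Δ) e^{−ϖ t_{k+1}}) > 0. -/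
/-- Zeno-exclusion estimate: if `h ≥ 0` on `[t_k, t_{k+1}]`, `h(t_k) = 0`,
`h' ≤ Ā h + Δ`, and `h(t_{k+1}) ≥ μ e^{−ϖ t_{k+1}}`, then
`t_{k+1} − t_k ≥ (1/Ā) ln(1 + (μĀ/Δ) e^{−ϖ t_{k+1}}) > 0`. -/
theorem stmt_12 (tk tk1 : ℝ) (h h' : ℝ → ℝ) (Abar Δ μ ϖ : ℝ)
    (hA : 0 < Abar) (hΔ : 0 < Δ) (hμ : 0 < μ) (hϖ : 0 < ϖ)
    (hlt : tk ≤ tk1)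
    (hnonneg : ∀ t, t ∈ Set.Icc tk tk1 → 0 ≤ h t)
    (h0 : h tk = 0)
    (hderiv : ∀ t, t ∈ Set.Icc tk tk1 → HasDerivAt h (h' t) t)
    (hle : ∀ t, t ∈ Set.Icc tk tk1 → h' t ≤ Abar * h t + Δ)
    (htrig : μ * Real.exp (-ϖ * tk1) ≤ h tk1) :
    (1 / Abar) * Real.log (1 + μ * Abar / Δ * Real.exp (-ϖ * tk1)) ≤ tk1 - tk ∧
    0 < (1 / Abar) * Real.log (1 + μ * Abar / Δ * Real.exp (-ϖ * tk1)) := by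
  have hexp : 0 < Real.exp (-ϖ * tk1) := Real.exp_pos _
  have hq : 0 < μ * Abar / Δ * Real.exp (-ϖ * tk1) := by positivity
  -- Grönwall bound
  have hg : h tk1 ≤ gronwallBound 0 Abar Δ (tk1 - tk) := by
    refine le_gronwallBound_of_liminf_deriv_right_le
      (fun t ht => ((hderiv t ht).continuousAt.continuousWithinAt))
      (fun x hx r hr => ?_) (le_of_eq h0)
      (fun x hx => hle x (Set.Ico_subset_Icc_self hx)) tk1 (Set.right_mem_Icc.2 hlt)
    have := (hasDerivAt_iff_tendsto_slope.1 (hderiv x (Set.Ico_subset_Icc_self hx)))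
    have h2 : Filter.Tendsto (slope h x) (nhdsWithin x (Set.Ioi x)) (nhds (h' x)) :=
      this.mono_left (nhdsWithin_mono x fun z hz => ne_of_gt hz)
    have h3 : ∀ᶠ z in nhdsWithin x (Set.Ioi x), slope h x z < r :=
      h2.eventually_lt_const hr
    refine (h3.mono fun z hz => ?_).frequently
    simpa [slope_def_field, div_eq_inv_mul] using hz
  have hgb : gronwallBound 0 Abar Δ (tk1 - tk) =
      Δ / Abar * (Real.exp (Abar * (tk1 - tk)) - 1) := by
    rw [gronwallBound_of_K_ne_0 hA.ne']; ring
  have key : μ * Real.exp (-ϖ * tk1) ≤ Δ / Abar * (Real.exp (Abar * (tk1 - tk)) - 1) := by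
    rw [← hgb]; exact htrig.trans hg
  have h1 : 1 + μ * Abar / Δ * Real.exp (-ϖ * tk1) ≤ Real.exp (Abar * (tk1 - tk)) := by
    have hc : Δ / Abar * Abar = Δ := div_mul_cancel₀ _ hA.ne'
    have key' : μ * Real.exp (-ϖ * tk1) * Abar / Δ ≤ Real.exp (Abar * (tk1 - tk)) - 1 := by
      rw [div_mul_eq_mul_div, le_div_iff₀ hA] at key
      rw [div_le_iff₀ hΔ]
      nlinarith
    have hr : μ * Abar / Δ * Real.exp (-ϖ * tk1) = μ * Real.exp (-ϖ * tk1) * Abar / Δ := by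
      ring
    linarith
  have hlog : Real.log (1 + μ * Abar / Δ * Real.exp (-ϖ * tk1)) ≤ Abar * (tk1 - tk) := by
    calc Real.log (1 + μ * Abar / Δ * Real.exp (-ϖ * tk1))
        ≤ Real.log (Real.exp (Abar * (tk1 - tk))) :=
          Real.log_le_log (by positivity) h1
      _ = Abar * (tk1 - tk) := Real.log_exp _
  constructor
  · rw [one_div, inv_mul_le_iff₀ hA]
    exact hlog
  · have hl : 0 < Real.log (1 + μ * Abar / Δ * Real.exp (-ϖ * tk1)) :=
      Real.log_pos (by linarith)
    exact mul_pos (by positivity) hl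
end

section
/- Let Ω be a symmetric matrix with Ω 1_n = 0 and (Ω ⊗ I_d) p = 0 where p stacks the nominal configuration a = (a₁,…,aₙ). Then for every target formation p*(t) = (I_n ⊗ Υ(t)) a + 1_n ⊗ υ(t), the follower part satisfies p*_f(t) = −(Ω_ff⁻¹ Ω_fl ⊗ I_d) p*_l(t), assuming Ω_ff invertible. -/
open Matrix Kronecker

/-- For every target formation `p* = (Iₙ ⊗ Υ)a + 1ₙ ⊗ υ` obtained from a
nominal configuration `a` with `(Ω ⊗ I_d)a = 0` and `Ω 1ₙ = 0`, the follower
part satisfies `p*_f = −(Ω_ff⁻¹ Ω_fl ⊗ I_d) p*_l` (with `Ω_ff` invertible). -/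
theorem stmt_16 (nl nf d : ℕ)
    (Ω : Matrix (Fin nl ⊕ Fin nf) (Fin nl ⊕ Fin nf) ℝ)
    (hsymm : Ω.IsSymm)
    (hones : Ω.mulVec (fun _ => 1) = 0)
    (a : (Fin nl ⊕ Fin nf) × Fin d → ℝ)
    (ha : (Ω ⊗ₖ (1 : Matrix (Fin d) (Fin d) ℝ)).mulVec a = 0)
    (hinv : IsUnit (Ω.submatrix Sum.inr Sum.inr).det) :
    ∀ (Υ : Matrix (Fin d) (Fin d) ℝ) (υ : Fin d → ℝ),
      (fun x : Fin nf × Fin d =>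
        (((1 : Matrix (Fin nl ⊕ Fin nf) (Fin nl ⊕ Fin nf) ℝ) ⊗ₖ Υ).mulVec a +
          fun z : (Fin nl ⊕ Fin nf) × Fin d => υ z.2) (Sum.inr x.1, x.2)) =
      -(((Ω.submatrix Sum.inr Sum.inr)⁻¹ * Ω.submatrix Sum.inr Sum.inl) ⊗ₖ
          (1 : Matrix (Fin d) (Fin d) ℝ)).mulVec
        (fun x : Fin nl × Fin d =>
          (((1 : Matrix (Fin nl ⊕ Fin nf) (Fin nl ⊕ Fin nf) ℝ) ⊗ₖ Υ).mulVec a +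
            fun z : (Fin nl ⊕ Fin nf) × Fin d => υ z.2) (Sum.inl x.1, x.2)) := by
  intro Υ υ
  set B := Ω.submatrix Sum.inr Sum.inr with hBdef
  have hB : B⁻¹ * B = 1 := nonsing_inv_mul B hinv
  -- the target formation
  set p : (Fin nl ⊕ Fin nf) × Fin d → ℝ :=
    ((1 : Matrix (Fin nl ⊕ Fin nf) (Fin nl ⊕ Fin nf) ℝ) ⊗ₖ Υ).mulVec a +
      fun z : (Fin nl ⊕ Fin nf) × Fin d => υ z.2 with hpdef
  -- key pointwise facts
  have key1 : ∀ (j : Fin nl ⊕ Fin nf) (m : Fin d),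
      ∑ i : Fin nl ⊕ Fin nf, Ω j i * a (i, m) = 0 := by
    intro j m
    have := congrFun ha (j, m)
    simp only [mulVec, dotProduct, Fintype.sum_prod_type, kroneckerMap_apply,
      one_apply, Pi.zero_apply, mul_ite, mul_one, mul_zero, ite_mul, zero_mul,
      Finset.sum_ite_eq, Finset.mem_univ, if_true] at this
    simpa using this
  have hones' : ∀ j : Fin nl ⊕ Fin nf, ∑ i : Fin nl ⊕ Fin nf, Ω j i = 0 := by
    intro j
    have := congrFun hones j
    simpa [mulVec, dotProduct] using this
  have hp : ∀ (i : Fin nl ⊕ Fin nf) (m : Fin d),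
      p (i, m) = (∑ t : Fin d, Υ m t * a (i, t)) + υ m := by
    intro i m
    simp only [hpdef, Pi.add_apply, mulVec, dotProduct, Fintype.sum_prod_type,
      kroneckerMap_apply, one_apply, ite_mul, zero_mul]
    congr 1
    rw [Finset.sum_comm]
    simp
  have key2 : ∀ (j : Fin nl ⊕ Fin nf) (m : Fin d),
      ∑ i : Fin nl ⊕ Fin nf, Ω j i * p (i, m) = 0 := by
    intro j m
    calc ∑ i : Fin nl ⊕ Fin nf, Ω j i * p (i, m)
        = ∑ i : Fin nl ⊕ Fin nf,
            ((∑ t : Fin d, Ω j i * (Υ m t * a (i, t))) + Ω j i * υ m) := by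
          simp_rw [hp, mul_add, Finset.mul_sum]
      _ = (∑ i : Fin nl ⊕ Fin nf, ∑ t : Fin d, Ω j i * (Υ m t * a (i, t)))
            + ∑ i : Fin nl ⊕ Fin nf, Ω j i * υ m := Finset.sum_add_distrib
      _ = (∑ t : Fin d, Υ m t * ∑ i : Fin nl ⊕ Fin nf, Ω j i * a (i, t))
            + (∑ i : Fin nl ⊕ Fin nf, Ω j i) * υ m := by
          rw [Finset.sum_comm, ← Finset.sum_mul]
          congr 1
          refine Finset.sum_congr rfl fun t _ => ?_
          rw [Finset.mul_sum]
          refine Finset.sum_congr rfl fun i _ => ?_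
          ring
      _ = 0 := by rw [hones' j]; simp [key1]
  funext x
  obtain ⟨f, k⟩ := x
  -- vectors of leader/follower coordinates at time-slice k
  set w : Fin nf → ℝ := fun h => p (Sum.inr h, k) with hwdef
  set u : Fin nl → ℝ := fun l => p (Sum.inl l, k) with hudef
  have hsplit : ∀ g : Fin nf,
      B.mulVec w g = -(Ω.submatrix Sum.inr Sum.inl).mulVec u g := by
    intro g
    have h2 := key2 (Sum.inr g) k
    rw [Fintype.sum_sum_type] at h2
    simp only [mulVec, dotProduct, hBdef, submatrix_apply, hwdef, hudef]
    linarith [h2]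
  have hvec : B.mulVec w = -(Ω.submatrix Sum.inr Sum.inl).mulVec u := by
    funext g; exact hsplit g
  have hw : w = -(B⁻¹ * Ω.submatrix Sum.inr Sum.inl).mulVec u := by
    have : (B⁻¹ * B).mulVec w = B⁻¹.mulVec (B.mulVec w) := by
      rw [← mulVec_mulVec]
    rw [hB] at this
    rw [one_mulVec] at this
    rw [this, hvec, mulVec_neg, mulVec_mulVec]
  -- compute the RHS
  have hRHS : (-(((B)⁻¹ * Ω.submatrix Sum.inr Sum.inl) ⊗ₖ
      (1 : Matrix (Fin d) (Fin d) ℝ)).mulVec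
        (fun x : Fin nl × Fin d => p (Sum.inl x.1, x.2))) (f, k)
      = (-(B⁻¹ * Ω.submatrix Sum.inr Sum.inl).mulVec u) f := by
    simp only [Pi.neg_apply, neg_inj, mulVec, dotProduct, Fintype.sum_prod_type,
      kroneckerMap_apply, one_apply, mul_ite, mul_one, mul_zero, ite_mul,
      zero_mul, Finset.sum_ite_eq, Finset.mem_univ, if_true, hudef]
  show p (Sum.inr f, k) = _
  rw [show (fun x : Fin nl × Fin d =>
      (((1 : Matrix (Fin nl ⊕ Fin nf) (Fin nl ⊕ Fin nf) ℝ) ⊗ₖ Υ).mulVec a +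
        fun z : (Fin nl ⊕ Fin nf) × Fin d => υ z.2) (Sum.inl x.1, x.2))
    = fun x : Fin nl × Fin d => p (Sum.inl x.1, x.2) from rfl]
  calc p (Sum.inr f, k) = w f := rfl
    _ = (-(B⁻¹ * Ω.submatrix Sum.inr Sum.inl).mulVec u) f := by rw [hw]
    _ = _ := by rw [← hRHS]
end
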